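/- Let G be a finite abstract simplicial complex. Then the sum over all simplices x in G of w(x)·χ(U(x)) equals χ(G), i.e. Σ_{x∈G} (−1)^{dim(x)} χ(U(x)) = χ(G). -/
import Mathlib


open Finset Polynomial

namespace SphereFormula

variable {V : Type} [DecidableEq V]

/-- A finite abstract simplicial complex: a finite collection of nonempty finite sets
that is closed under taking nonempty subsets. -/
def IsComplex (G : Finset (Finset V)) : Prop :=
  ∀ x ∈ G, x.Nonempty ∧ ∀ y, y ⊆ x → y.Nonempty → y ∈ G

/-- `w x = (-1)^(dim x)` where `dim x = |x| - 1`. -/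
def w (x : Finset V) : ℤ := (-1) ^ (x.card - 1)

/-- Euler characteristic of a finite set of simplices: `χ(A) = Σ_{x ∈ A} w x`. -/
def chi (A : Finset (Finset V)) : ℤ := ∑ x ∈ A, w x

/-- The star `U(x) = {y ∈ G : x ⊆ y}`. -/
def star (G : Finset (Finset V)) (x : Finset V) : Finset (Finset V) :=
  G.filter fun y => x ⊆ y

/-- The unit ball `B(x) = {z ∈ G : z ⊆ y for some y ∈ U(x)}` (closure of the star). -/
def ball (G : Finset (Finset V)) (x : Finset V) : Finset (Finset V) :=
  G.filter fun z => ∃ y ∈ G, x ⊆ y ∧ z ⊆ y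

/-- The unit sphere `S(x) = B(x) \ U(x)`. -/
def sphere (G : Finset (Finset V)) (x : Finset V) : Finset (Finset V) :=
  ball G x \ star G x

/-- The vertex set of `G`: those `v` with `{v} ∈ G`. -/
def verts (G : Finset (Finset V)) : Finset V :=
  (G.biUnion id).filter fun v => {v} ∈ G

/-- Contractibility, defined inductively: a single vertex complex is contractible, and `G`
is contractible if there is `x ∈ G` with both `S(x)` and `G \ U(x)` contractible. -/
inductive Contractible : Finset (Finset V) → Prop where
  | point (v : V) : Contractible ({({v} : Finset V)} : Finset (Finset V))
  | step (G : Finset (Finset V)) (x : Finset V) (hx : x ∈ G)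
      (hS : Contractible (sphere G x)) (hG : Contractible (G \ star G x)) :
      Contractible G

mutual
  /-- `G` is a `d`-manifold (`d ≥ 0`): every unit sphere `S(x)` is a `(d-1)`-sphere. -/
  inductive IsManifold : ℤ → Finset (Finset V) → Prop where
    | mk (d : ℤ) (G : Finset (Finset V)) (hd : 0 ≤ d)
        (h : ∀ x ∈ G, IsSphere (d - 1) (sphere G x)) : IsManifold d G

  /-- `d`-spheres: the empty complex is the `(-1)`-sphere, and a `d`-sphere is a
  `d`-manifold `G` such that `G \ U(x)` is contractible for some `x ∈ G`. -/
  inductive IsSphere : ℤ → Finset (Finset V) → Prop where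
    | empty : IsSphere (-1) (∅ : Finset (Finset V))
    | mk (d : ℤ) (G : Finset (Finset V)) (hm : IsManifold d G)
        (h : ∃ x ∈ G, Contractible (G \ star G x)) : IsSphere d G
end

/-- The f-function `f_G(t) = 1 + Σ_{k ≥ 0} f_k(G) t^(k+1) = 1 + Σ_{x ∈ G} t^|x|`. -/
noncomputable def fPoly (G : Finset (Finset V)) : Polynomial ℚ :=
  1 + ∑ x ∈ G, Polynomial.X ^ x.card

/-- `F_H(t) = ∫_0^t f_H(s) ds = t + Σ_{k ≥ 0} f_k(H) t^(k+2)/(k+2)`. -/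
noncomputable def FPoly (H : Finset (Finset V)) : Polynomial ℚ :=
  Polynomial.X +
    ∑ x ∈ H, Polynomial.C (((x.card : ℚ) + 1)⁻¹) * Polynomial.X ^ (x.card + 1)

/-- The join `G + H = G ∪ H ∪ {x ∪ y : x ∈ G, y ∈ H}`. -/
def joinC (G H : Finset (Finset V)) : Finset (Finset V) :=
  G ∪ H ∪ (G ×ˢ H).image fun p => p.1 ∪ p.2

/-- The barycentric refinement: simplices are the nonempty chains in `(G, ⊆)`. -/
def bary (G : Finset (Finset V)) : Finset (Finset (Finset V)) :=
  G.powerset.filter fun c => c.Nonempty ∧ ∀ x ∈ c, ∀ y ∈ c, x ⊆ y ∨ y ⊆ x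

/-- `f` is locally injective: distinct vertices of a common simplex have distinct values. -/
def LocallyInjective (G : Finset (Finset V)) (f : V → ℤ) : Prop :=
  ∀ x ∈ G, ∀ v ∈ x, ∀ u ∈ x, v ≠ u → f v ≠ f u

lemma sum_w_nonempty_subsets (y : Finset V) (hy : y.Nonempty) :
    ∑ x ∈ y.powerset.filter Finset.Nonempty, w x = 1 := by
  have h0 : ∑ x ∈ y.powerset, (-1 : ℤ) ^ x.card = 0 := by
    rw [Finset.sum_powerset_neg_one_pow_card]
    simp [Finset.nonempty_iff_ne_empty.mp hy]
  have hsplit : y.powerset = insert ∅ (y.powerset.filter Finset.Nonempty) := by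
    ext x
    simp only [Finset.mem_insert, Finset.mem_filter, Finset.mem_powerset]
    constructor
    · intro hx
      rcases x.eq_empty_or_nonempty with h | h
      · exact Or.inl h
      · exact Or.inr ⟨hx, h⟩
    · rintro (rfl | ⟨hx, _⟩)
      · exact Finset.empty_subset y
      · exact hx
  rw [hsplit, Finset.sum_insert (by simp [Finset.nonempty_iff_ne_empty])] at h0
  have hw : ∀ x ∈ y.powerset.filter Finset.Nonempty, w x = -(-1 : ℤ) ^ x.card := by
    intro x hx
    have hxne : x.Nonempty := (Finset.mem_filter.mp hx).2
    have hc : 1 ≤ x.card := Finset.card_pos.mpr hxne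
    unfold w
    conv_rhs => rw [show x.card = (x.card - 1) + 1 from (Nat.succ_pred_eq_of_pos hc).symm]
    rw [pow_succ]; ring
  rw [Finset.sum_congr rfl hw, Finset.sum_neg_distrib]
  simp only [Finset.card_empty, pow_zero] at h0
  linarith

/-- Energy formula: `Σ_{x ∈ G} w(x) · χ(U(x)) = χ(G)`. -/
theorem energy_formula {V : Type} [DecidableEq V] (G : Finset (Finset V))
    (hG : IsComplex G) :
    ∑ x ∈ G, w x * chi (star G x) = chi G := by
  unfold chi star
  have key : ∀ y ∈ G, ∑ x ∈ G.filter (fun x => x ⊆ y), w x = 1 := by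
    intro y hy
    have : G.filter (fun x => x ⊆ y) = y.powerset.filter Finset.Nonempty := by
      ext x
      simp only [Finset.mem_filter, Finset.mem_powerset]
      constructor
      · intro ⟨hxG, hxy⟩
        exact ⟨hxy, (hG x hxG).1⟩
      · intro ⟨hxy, hxne⟩
        exact ⟨(hG y hy).2 x hxy hxne, hxy⟩
    rw [this]
    exact sum_w_nonempty_subsets y (hG y hy).1
  calc ∑ x ∈ G, w x * ∑ y ∈ G.filter (fun y => x ⊆ y), w y
      = ∑ x ∈ G, ∑ y ∈ G, if x ⊆ y then w x * w y else 0 := by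
        refine Finset.sum_congr rfl fun x _ => ?_
        rw [Finset.mul_sum, Finset.sum_filter]
    _ = ∑ y ∈ G, ∑ x ∈ G, if x ⊆ y then w x * w y else 0 := Finset.sum_comm
    _ = ∑ y ∈ G, (∑ x ∈ G.filter (fun x => x ⊆ y), w x) * w y := by
        refine Finset.sum_congr rfl fun y _ => ?_
        rw [Finset.sum_mul, Finset.sum_filter]
    _ = ∑ y ∈ G, w y := by
        refine Finset.sum_congr rfl fun y hy => ?_
        rw [key y hy, one_mul]

end SphereFormula
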